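/- arXiv:2602.21674 — 2 statements merged into one kernel-verified Lean document; each statement's English description precedes it below -/
import Mathlib

section
/- Let H be an e-persistent Mealy machine, C a fault domain, T a test suite complete for H w.r.t. C, and L ⊆ I* a reference language that is sound for H and for every machine in C (i.e., every word not in L produces an output ending in e). Then the sound test suite T_S(H,L), obtained by truncating each σ ∈ T to its longest prefix in L when that prefix is shorter than the point where H first outputs e, and otherwise applying the e-truncation filter, is complete for H w.r.t. the e-persistent subdomain C_e. -/
structure Mealy (I O : Type) where
  Q : Type
  q0 : Q
  trans : Q → I → Q
  out1 : Q → I → O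

namespace Mealy

variable {I O : Type}

def run (M : Mealy I O) : M.Q → List I → M.Q
  | q, [] => q
  | q, i :: σ => M.run (M.trans q i) σ

def out (M : Mealy I O) : M.Q → List I → List O
  | _, [] => []
  | q, i :: σ => M.out1 q i :: M.out (M.trans q i) σ

/-- `M` is `e`-persistent: once the output word ends in `e`, appending any
input keeps the last output equal to `e`. -/
def EPersistent (M : Mealy I O) (e : O) : Prop :=
  ∀ (σ : List I) (i : I),
    (M.out M.q0 σ).getLast? = some e →
    (M.out M.q0 (σ ++ [i])).getLast? = some e

end Mealy

def FirstError {I O : Type} (H : Mealy I O) (e : O) (σ : List I) (i : ℕ) : Prop :=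
  (H.out H.q0 σ)[i]? ≠ some e ∧ (H.out H.q0 σ)[i + 1]? = some e ∧
    ∀ j < i, ¬ ((H.out H.q0 σ)[j]? ≠ some e ∧ (H.out H.q0 σ)[j + 1]? = some e)

/-- `i` is the position of the first error w.r.t. the reference language `L`:
the length-`i` prefix of `σ` is in `L`, the length-`(i+1)` prefix is not, and
no earlier index has this property. -/
def FirstErrorL {I : Type} (L : Set (List I)) (σ : List I) (i : ℕ) : Prop :=
  σ.take i ∈ L ∧ σ.take (i + 1) ∉ L ∧
    ∀ j < i, ¬ (σ.take j ∈ L ∧ σ.take (j + 1) ∉ L)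

/-- `L` is a sound reference for `M`: every word outside `L` produces an
output ending in `e`. -/
def SoundRef {I O : Type} (L : Set (List I)) (M : Mealy I O) (e : O) : Prop :=
  ∀ σ ∉ L, (M.out M.q0 σ).getLast? = some e

/-- The sound test suite `T_S(H,L)`: each `σ ∈ T` is truncated to its longest
prefix in `L` when `firstError(L,σ) = i < ∞` and `i ≤ firstError(H,σ)`, and
otherwise the `e`-truncation filter `f_e(H,·)` is applied. -/
def fsSet {I O : Type} (H : Mealy I O) (e : O) (L : Set (List I))
    (T : Set (List I)) : Set (List I) :=
  { τ | ∃ σ ∈ T,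
      (∃ i : ℕ, FirstErrorL L σ i ∧ (∀ j : ℕ, FirstError H e σ j → i ≤ j) ∧
        τ = σ.take i) ∨
      ((¬ ∃ i : ℕ, FirstErrorL L σ i ∧ ∀ j : ℕ, FirstError H e σ j → i ≤ j) ∧
        ((∃ i : ℕ, FirstError H e σ i ∧ τ = σ.take (i + 2)) ∨
         ((¬ ∃ i : ℕ, FirstError H e σ i) ∧ τ = σ))) }

def TestComplete {I O : Type} (H : Mealy I O) (T : Set (List I))
    (C : Set (Mealy I O)) : Prop :=
  ∀ M ∈ C, (∀ σ ∈ T, H.out H.q0 σ = M.out M.q0 σ) →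
    ∀ σ : List I, H.out H.q0 σ = M.out M.q0 σ

/-!
By completeness of `T` it suffices that every `M ∈ C_e` agreeing with `H` on `T_S(H,L)` agrees
with `H` on each `σ ∈ T`. The test derived from `σ` is a prefix of `σ` on which the two machines
agree and after which both are already forced to output `e`: by soundness of `L` when `σ` is cut
at its first `L`-error, and by agreement on the prefix when it is cut just after `H`'s first `e`.
By `e`-persistence both outputs stay `e` on the rest of `σ`.
-/

namespace Mealy

variable {I O : Type}

@[simp]
theorem out_length (M : Mealy I O) : ∀ (q : M.Q) (σ : List I), (M.out q σ).length = σ.length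
  | _, [] => rfl
  | q, _ :: σ => by simp [out, out_length M _ σ]

theorem out_take (M : Mealy I O) : ∀ (q : M.Q) (σ : List I) (k : ℕ),
    M.out q (σ.take k) = (M.out q σ).take k
  | _, [], _ => by simp [out]
  | _, _ :: _, 0 => by simp [out]
  | q, _ :: σ, k + 1 => by simp [out, out_take M _ σ]

theorem getElem?_out_eq_getLast?_out_take (M : Mealy I O) (q : M.Q) {σ : List I} {k : ℕ}
    (hk : k < σ.length) : (M.out q σ)[k]? = (M.out q (σ.take (k + 1))).getLast? := by
  have hk' : k < (M.out q σ).length := by simpa using hk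
  simp [out_take, List.getLast?_take, List.getElem?_eq_getElem hk']

variable {M H : Mealy I O} {e : O}

theorem EPersistent.getLast?_out_of_prefix (hM : M.EPersistent e) {τ σ : List I}
    (hτσ : τ <+: σ) (hτ : (M.out M.q0 τ).getLast? = some e) :
    (M.out M.q0 σ).getLast? = some e := by
  obtain ⟨ρ, rfl⟩ := hτσ
  induction ρ using List.reverseRecOn with
  | nil => simpa using hτ
  | append_singleton ρ i ih => simpa [List.append_assoc] using hM _ i ih

theorem EPersistent.getElem?_out_of_le (hM : M.EPersistent e) {σ : List I} {j k : ℕ}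
    (hjk : j ≤ k) (hk : k < σ.length) (hj : (M.out M.q0 σ)[j]? = some e) :
    (M.out M.q0 σ)[k]? = some e := by
  rw [getElem?_out_eq_getLast?_out_take _ _ (hjk.trans_lt hk)] at hj
  rw [getElem?_out_eq_getLast?_out_take _ _ hk]
  exact hM.getLast?_out_of_prefix (List.take_prefix_take_left (by omega)) hj

theorem out_eq_of_out_take_eq (hH : H.EPersistent e) (hM : M.EPersistent e) {σ : List I}
    {j m : ℕ} (hjm : j ≤ m) (htake : H.out H.q0 (σ.take m) = M.out M.q0 (σ.take m))
    (hHj : (H.out H.q0 σ)[j]? = some e) (hMj : (M.out M.q0 σ)[j]? = some e) :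
    H.out H.q0 σ = M.out M.q0 σ := by
  apply List.ext_getElem?
  intro k
  by_cases hkm : k < m
  · simpa [out_take, hkm] using congrArg (·[k]?) htake
  by_cases hk : k < σ.length
  · rw [hH.getElem?_out_of_le (by omega) hk hHj, hM.getElem?_out_of_le (by omega) hk hMj]
  · simp [hk]

theorem out_eq_of_out_take_eq_of_lt (hH : H.EPersistent e) (hM : M.EPersistent e)
    {σ : List I} {j m : ℕ} (hjm : j < m)
    (htake : H.out H.q0 (σ.take m) = M.out M.q0 (σ.take m))
    (hHj : (H.out H.q0 σ)[j]? = some e) : H.out H.q0 σ = M.out M.q0 σ := by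
  have hMj : (M.out M.q0 σ)[j]? = some e := by
    simpa [out_take, hjm, hHj] using (congrArg (·[j]?) htake).symm
  exact out_eq_of_out_take_eq hH hM hjm.le htake hHj hMj

theorem out_eq_of_out_take_eq_of_take_succ_not_mem {L : Set (List I)} (hH : H.EPersistent e)
    (hM : M.EPersistent e) (hLH : SoundRef L H e) (hLM : SoundRef L M e) {σ : List I} {i : ℕ}
    (htake : H.out H.q0 (σ.take i) = M.out M.q0 (σ.take i)) (hi : σ.take (i + 1) ∉ L) :
    H.out H.q0 σ = M.out M.q0 σ := by
  rcases lt_or_ge i σ.length with hiσ | hiσ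
  · have hHi := hLH _ hi
    have hMi := hLM _ hi
    rw [← getElem?_out_eq_getLast?_out_take _ _ hiσ] at hHi hMi
    exact out_eq_of_out_take_eq hH hM le_rfl htake hHi hMi
  · rwa [List.take_of_length_le hiσ] at htake

end Mealy

/-- If `H` is `e`-persistent, `T` is complete for `H` w.r.t. `C`, and the
reference `L` is sound for `H` and for every machine in `C`, then the sound
test suite `T_S(H,L)` is complete for `H` w.r.t. the `e`-persistent
subdomain `C_e`. -/
theorem stmt3 {I O : Type} (H : Mealy I O) (e : O) (L : Set (List I))
    (T : Set (List I)) (C : Set (Mealy I O))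
    (hH : H.EPersistent e)
    (hT : TestComplete H T C)
    (hSoundH : SoundRef L H e)
    (hSoundC : ∀ M ∈ C, SoundRef L M e) :
    TestComplete H (fsSet H e L T) {M | M ∈ C ∧ M.EPersistent e} := by
  rintro M ⟨hMC, hM⟩ hagree
  refine hT M hMC fun σ hσT => ?_
  by_cases hL : ∃ i : ℕ, FirstErrorL L σ i ∧ ∀ j : ℕ, FirstError H e σ j → i ≤ j
  · obtain ⟨i, hi, hile⟩ := hL
    exact Mealy.out_eq_of_out_take_eq_of_take_succ_not_mem hH hM hSoundH (hSoundC M hMC)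
      (hagree _ ⟨σ, hσT, .inl ⟨i, hi, hile, rfl⟩⟩) hi.2.1
  by_cases hE : ∃ i : ℕ, FirstError H e σ i
  · obtain ⟨i, hi⟩ := hE
    exact Mealy.out_eq_of_out_take_eq_of_lt hH hM (Nat.lt_succ_self (i + 1))
      (hagree _ ⟨σ, hσT, .inr ⟨hL, .inl ⟨i, hi, rfl⟩⟩⟩) hi.2.1
  · exact hagree _ ⟨σ, hσT, .inr ⟨hL, .inr ⟨hE, rfl⟩⟩⟩
end

section
/- S-apartness with respect to a sound reference refines ordinary apartness when the reference is sound for the underlying machine: if T is an observation tree for an e-persistent Mealy machine M, L is sound for M, and two tree states p, q are S-apart with respect to L, then the states m(p) and m(q) of M that they map to are not equivalent in M (there is an input word on which m(p) and m(q) produce different outputs). -/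
structure PMealy (I O : Type) where
  Q : Type
  q0 : Q
  trans : Q → I → Option Q
  out1 : Q → I → Option O

namespace PMealy

variable {I O : Type}

def pout (M : PMealy I O) : M.Q → List I → Option (List O)
  | _, [] => some []
  | q, i :: σ =>
    match M.out1 q i, M.trans q i with
    | some o, some q' => (M.pout q' σ).map (o :: ·)
    | _, _ => none

def prun (M : PMealy I O) : M.Q → List I → Option M.Q
  | q, [] => some q
  | q, i :: σ =>
    match M.trans q i with
    | some q' => M.prun q' σ
    | none => none

/-- States `p` and `q` are apart: some input word on which both outputs are
defined produces different output words. -/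
def Apart (M : PMealy I O) (p q : M.Q) : Prop :=
  ∃ (σ : List I) (a b : List O),
    M.pout p σ = some a ∧ M.pout q σ = some b ∧ a ≠ b

end PMealy

/-- Tree states `p, q` are `S`-apart w.r.t. the reference `L`: there is a
word `σ` on which the defined tree outputs differ, or the output from one
state is defined with last symbol different from `e` while the access word of
the other state extended by `σ` lies outside `L`. -/
def SApart {I O : Type} (T : PMealy I O) (e : O) (L : Set (List I))
    (acc : T.Q → List I) (p q : T.Q) : Prop :=
  ∃ σ : List I,
    (∃ a b : List O, T.pout p σ = some a ∧ T.pout q σ = some b ∧ a ≠ b) ∨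
    (∃ (a : List O) (x : O), T.pout p σ = some a ∧ a.getLast? = some x ∧
      x ≠ e ∧ acc q ++ σ ∉ L) ∨
    (∃ (b : List O) (x : O), T.pout q σ = some b ∧ b.getLast? = some x ∧
      x ≠ e ∧ acc p ++ σ ∉ L)

namespace Mealy

variable {I O : Type} (M : Mealy I O)

theorem out_append (r : M.Q) (w σ : List I) :
    M.out r (w ++ σ) = M.out r w ++ M.out (M.run r w) σ := by
  induction w generalizing r with
  | nil => rfl
  | cons i w ih => simp [out, run, ih]

theorem length_out (r : M.Q) (σ : List I) : (M.out r σ).length = σ.length := by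
  induction σ generalizing r with
  | nil => rfl
  | cons i σ ih => simp [out, ih]

theorem out_eq_nil_iff {r : M.Q} {σ : List I} : M.out r σ = [] ↔ σ = [] := by
  rw [← List.length_eq_zero_iff, length_out, List.length_eq_zero_iff]

theorem getLast?_out_run {r : M.Q} (w : List I) {σ : List I} (hσ : σ ≠ []) :
    (M.out (M.run r w) σ).getLast? = (M.out r (w ++ σ)).getLast? := by
  rw [out_append, List.getLast?_append_of_ne_nil _ (M.out_eq_nil_iff.not.mpr hσ)]

end Mealy

namespace PMealy

variable {I O : Type}

def IsObservationMap (T : PMealy I O) (M : Mealy I O) (m : T.Q → M.Q) : Prop :=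
  ∀ (q : T.Q) (i : I) (q' : T.Q), T.trans q i = some q' →
    M.trans (m q) i = m q' ∧ T.out1 q i = some (M.out1 (m q) i)

variable {T : PMealy I O} {M : Mealy I O} {m : T.Q → M.Q}

theorem IsObservationMap.out_eq_of_pout_eq_some (hm : T.IsObservationMap M m) {σ : List I}
    {p : T.Q} {a : List O} (h : T.pout p σ = some a) : M.out (m p) σ = a := by
  induction σ generalizing p a with
  | nil => simpa [pout, Mealy.out, eq_comm] using h
  | cons i σ ih =>
    cases htrans : T.trans p i with
    | none => cases hout : T.out1 p i <;> simp [pout, hout, htrans] at h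
    | some p' =>
      obtain ⟨hmtrans, hout⟩ := hm p i p' htrans
      simp only [pout, hout, htrans, Option.map_eq_some_iff] at h
      obtain ⟨a', ha', rfl⟩ := h
      simp [Mealy.out, hmtrans, ih ha']

theorem IsObservationMap.run_eq_of_prun_eq_some (hm : T.IsObservationMap M m) {w : List I}
    {t q : T.Q} (h : T.prun t w = some q) : M.run (m t) w = m q := by
  induction w generalizing t with
  | nil =>
    simp only [prun, Option.some.injEq] at h
    simp [Mealy.run, h]
  | cons i w ih =>
    cases htrans : T.trans t i with
    | none => simp [prun, htrans] at h
    | some t' =>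
      simp only [prun, htrans] at h
      simp [Mealy.run, (hm t i t' htrans).1, ih h]

end PMealy

section SoundReference

variable {I O : Type} {M : Mealy I O} {e : O} {T : PMealy I O} {m : T.Q → M.Q}
  {acc : T.Q → List I} {L : Set (List I)}

theorem getLast?_out_eq_of_append_not_mem (hm : T.IsObservationMap M m) (hroot : m T.q0 = M.q0)
    (hacc : ∀ q : T.Q, T.prun T.q0 (acc q) = some q)
    (hsound : ∀ σ ∉ L, (M.out M.q0 σ).getLast? = some e)
    {s : T.Q} {σ : List I} (hσ : σ ≠ []) (hL : acc s ++ σ ∉ L) :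
    (M.out (m s) σ).getLast? = some e := by
  rw [← hm.run_eq_of_prun_eq_some (hacc s), hroot, M.getLast?_out_run _ hσ]
  exact hsound _ hL

theorem out_ne_of_getLast?_pout_ne (hm : T.IsObservationMap M m) (hroot : m T.q0 = M.q0)
    (hacc : ∀ q : T.Q, T.prun T.q0 (acc q) = some q)
    (hsound : ∀ σ ∉ L, (M.out M.q0 σ).getLast? = some e)
    {r s : T.Q} {σ : List I} {a : List O} {x : O} (hr : T.pout r σ = some a)
    (hx : a.getLast? = some x) (hxe : x ≠ e) (hL : acc s ++ σ ∉ L) :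
    M.out (m r) σ ≠ M.out (m s) σ := by
  have hra : M.out (m r) σ = a := hm.out_eq_of_pout_eq_some hr
  have hσ : σ ≠ [] := by
    rintro rfl
    simp [← hra, Mealy.out] at hx
  intro hrs
  have hse := getLast?_out_eq_of_append_not_mem hm hroot hacc hsound hσ hL
  rw [← hrs, hra, hx] at hse
  exact hxe (Option.some_injective _ hse)

end SoundReference

theorem stmt8_general {I O : Type} (M : Mealy I O) (e : O) (T : PMealy I O)
    (m : T.Q → M.Q) (acc : T.Q → List I)
    (hroot : m T.q0 = M.q0)
    (hobs : ∀ (q : T.Q) (i : I) (q' : T.Q), T.trans q i = some q' →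
      M.trans (m q) i = m q' ∧ T.out1 q i = some (M.out1 (m q) i))
    (hacc : ∀ q : T.Q, T.prun T.q0 (acc q) = some q)
    (L : Set (List I))
    (hsound : ∀ σ ∉ L, (M.out M.q0 σ).getLast? = some e)
    (p q : T.Q) (hap : SApart T e L acc p q) :
    ∃ σ : List I, M.out (m p) σ ≠ M.out (m q) σ := by
  have hm : T.IsObservationMap M m := hobs
  obtain ⟨σ, ⟨a, b, hpa, hqb, hab⟩ | ⟨a, x, hpa, hx, hxe, hL⟩ | ⟨b, x, hqb, hx, hxe, hL⟩⟩ := hap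
  · refine ⟨σ, ?_⟩
    rwa [hm.out_eq_of_pout_eq_some hpa, hm.out_eq_of_pout_eq_some hqb]
  · exact ⟨σ, out_ne_of_getLast?_pout_ne hm hroot hacc hsound hpa hx hxe hL⟩
  · exact ⟨σ, (out_ne_of_getLast?_pout_ne hm hroot hacc hsound hqb hx hxe hL).symm⟩

/-- If `T` is an observation tree for the `e`-persistent machine `M`, `L` is
sound for `M`, and tree states `p, q` are `S`-apart w.r.t. `L`, then the
states `m p` and `m q` of `M` are inequivalent. -/
theorem stmt8 {I O : Type} (M : Mealy I O) (e : O) (T : PMealy I O)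
    (m : T.Q → M.Q) (acc : T.Q → List I)
    (hroot : m T.q0 = M.q0)
    (hobs : ∀ (q : T.Q) (i : I) (q' : T.Q), T.trans q i = some q' →
      M.trans (m q) i = m q' ∧ T.out1 q i = some (M.out1 (m q) i))
    (hacc : ∀ q : T.Q, T.prun T.q0 (acc q) = some q)
    (hpers : M.EPersistent e)
    (L : Set (List I))
    (hsound : ∀ σ ∉ L, (M.out M.q0 σ).getLast? = some e)
    (p q : T.Q) (hap : SApart T e L acc p q) :
    ∃ σ : List I, M.out (m p) σ ≠ M.out (m q) σ :=
  stmt8_general M e T m acc hroot hobs hacc L hsound p q hap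
end
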